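/- Let Σ_A and Σ_E be the standard symplectic form matrices of sizes 2n×2n and 2m×2m respectively, let λ > 0, and let S be a (2n+2m)×(2n+2m) real matrix satisfying Sᵀ·diag(Σ_A, Σ_E)·S = diag(Σ_A, Σ_E), with block form S = [[S_AA, S_AE],[S_EA, S_EE]] (S_AA of size 2n×2n). Let γ_E be a real symmetric 2m×2m matrix with γ_E + iλΣ_E positive semidefinite. Set X := S_AA and Y := S_EAᵀ γ_E S_EA. Then the Hermitian matrix Y − iλΣ_A + iλXᵀΣ_A X is positive semidefinite (equivalently, Y ≥ iλΣ_A − iλXᵀΣ_A X). -/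

import Mathlib

open Matrix
open scoped ComplexOrder

/-- The standard 2n×2n symplectic form matrix: block diagonal with n blocks
[[0,-1],[1,0]]. -/
def stdSymp (n : ℕ) : Matrix (Fin (2 * n)) (Fin (2 * n)) ℝ :=
  Matrix.of fun i j =>
    if (j : ℕ) = (i : ℕ) + 1 ∧ (i : ℕ) % 2 = 0 then -1
    else if (i : ℕ) = (j : ℕ) + 1 ∧ (j : ℕ) % 2 = 0 then 1
    else 0

/-!
The environment covariance γ_E + iλΣ_E is PSD, hence so is its complex conjugate
(= its transpose) γ_E − iλΣ_E, and hence so is the congruence S_EAᵀ(γ_E − iλΣ_E)S_EA.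
The (A,A) block of SᵀΣS = Σ gives S_EAᵀΣ_E S_EA = Σ_A − XᵀΣ_A X, which turns this
congruence into Y − iλΣ_A + iλXᵀΣ_A X.
-/

lemma stdSymp_transpose (k : ℕ) : (stdSymp k)ᵀ = -stdSymp k := by
  ext i j
  simp only [stdSymp, transpose_apply, Matrix.neg_apply, of_apply]
  split_ifs <;> first | (exfalso; omega) | norm_num

lemma Matrix.toBlocks₁₁_transpose_mul_fromBlocks_zero_zero_mul {k p l m α : Type*}
    [Fintype l] [Fintype m] [Semiring α]
    (A : Matrix l k α) (B : Matrix l p α) (C : Matrix m k α) (D : Matrix m p α)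
    (P : Matrix l l α) (Q : Matrix m m α) :
    ((fromBlocks A B C D)ᵀ * fromBlocks P 0 0 Q * fromBlocks A B C D).toBlocks₁₁ =
      Aᵀ * P * A + Cᵀ * Q * C := by
  simp [fromBlocks_transpose, fromBlocks_multiply, Matrix.mul_assoc]

section ComplexOfReal

variable {ι κ ν : Type*}

lemma Matrix.map_ofReal_mul [Fintype κ] (M : Matrix ι κ ℝ) (N : Matrix κ ν ℝ) :
    (M * N).map Complex.ofReal = M.map Complex.ofReal * N.map Complex.ofReal :=
  Matrix.map_mul (f := Complex.ofRealHom)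

lemma Matrix.map_ofReal_sub (M N : Matrix ι κ ℝ) :
    (M - N).map Complex.ofReal = M.map Complex.ofReal - N.map Complex.ofReal :=
  Matrix.map_sub _ Complex.ofReal_sub _ _

lemma Matrix.conjTranspose_map_ofReal (M : Matrix ι κ ℝ) :
    (M.map Complex.ofReal)ᴴ = Mᵀ.map Complex.ofReal := by
  ext i j
  simp [conjTranspose_apply]

lemma Matrix.PosSemidef.map_ofReal_sub_smul_of_add [Fintype ι] {γ Ω : Matrix ι ι ℝ}
    (hγ : γ.IsSymm) (hΩ : Ωᵀ = -Ω) (c : ℂ)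
    (h : (γ.map Complex.ofReal + c • Ω.map Complex.ofReal).PosSemidef) :
    (γ.map Complex.ofReal - c • Ω.map Complex.ofReal).PosSemidef := by
  have hconj : (γ.map Complex.ofReal + c • Ω.map Complex.ofReal)ᵀ =
      γ.map Complex.ofReal - c • Ω.map Complex.ofReal := by
    rw [transpose_add, transpose_smul, ← transpose_map, ← transpose_map, hγ.eq, hΩ,
      Matrix.map_neg _ Complex.ofReal_neg, smul_neg, sub_eq_add_neg]
  exact hconj ▸ h.transpose

lemma Matrix.PosSemidef.transpose_mul_mul_map_ofReal [Fintype ι] [Fintype κ]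
    {γ Ω : Matrix κ κ ℝ} {c : ℂ}
    (h : (γ.map Complex.ofReal - c • Ω.map Complex.ofReal).PosSemidef) (B : Matrix κ ι ℝ) :
    ((Bᵀ * γ * B).map Complex.ofReal - c • (Bᵀ * Ω * B).map Complex.ofReal).PosSemidef := by
  convert h.conjTranspose_mul_mul_same (B.map Complex.ofReal) using 1
  simp only [conjTranspose_map_ofReal, map_ofReal_mul, Matrix.mul_sub, Matrix.sub_mul,
    Matrix.mul_smul, Matrix.smul_mul]

end ComplexOfReal

theorem dilation_necessity_general {n m : ℕ} (lam : ℝ)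
    (SAA : Matrix (Fin (2 * n)) (Fin (2 * n)) ℝ)
    (SAE : Matrix (Fin (2 * n)) (Fin (2 * m)) ℝ)
    (SEA : Matrix (Fin (2 * m)) (Fin (2 * n)) ℝ)
    (SEE : Matrix (Fin (2 * m)) (Fin (2 * m)) ℝ)
    (hS : (Matrix.fromBlocks SAA SAE SEA SEE)ᵀ *
        Matrix.fromBlocks (stdSymp n) 0 0 (stdSymp m) *
        Matrix.fromBlocks SAA SAE SEA SEE =
        Matrix.fromBlocks (stdSymp n) 0 0 (stdSymp m))
    (γE : Matrix (Fin (2 * m)) (Fin (2 * m)) ℝ) (hγE : γE.IsSymm)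
    (hγEcup : (γE.map Complex.ofReal +
        (Complex.I * (lam : ℂ)) • (stdSymp m).map Complex.ofReal).PosSemidef) :
    ((SEAᵀ * γE * SEA).map Complex.ofReal -
        (Complex.I * (lam : ℂ)) • (stdSymp n).map Complex.ofReal +
        (Complex.I * (lam : ℂ)) •
          (SAAᵀ * stdSymp n * SAA).map Complex.ofReal).PosSemidef := by
  have hAA : SAAᵀ * stdSymp n * SAA + SEAᵀ * stdSymp m * SEA = stdSymp n := by
    rw [← toBlocks₁₁_transpose_mul_fromBlocks_zero_zero_mul, hS, toBlocks_fromBlocks₁₁]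
  have hEA : SEAᵀ * stdSymp m * SEA = stdSymp n - SAAᵀ * stdSymp n * SAA :=
    eq_sub_of_add_eq' hAA
  have hconj := (hγEcup.map_ofReal_sub_smul_of_add hγE (stdSymp_transpose m)
    ).transpose_mul_mul_map_ofReal SEA
  rw [hEA, map_ofReal_sub, smul_sub] at hconj
  convert hconj using 1
  abel

/-- Necessity direction of the characterization of valid irreversible transformations:
if S is symplectic on the joint system+environment phase space and the environment
covariance matrix γ_E satisfies the CUP, then X = S_AA and Y = S_EAᵀ γ_E S_EA satisfy
Y ≥ iλΣ_A − iλXᵀΣ_A X, i.e. Y − iλΣ_A + iλXᵀΣ_A X is positive semidefinite. -/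
theorem dilation_necessity {n m : ℕ} (lam : ℝ) (hlam : 0 < lam)
    (SAA : Matrix (Fin (2 * n)) (Fin (2 * n)) ℝ)
    (SAE : Matrix (Fin (2 * n)) (Fin (2 * m)) ℝ)
    (SEA : Matrix (Fin (2 * m)) (Fin (2 * n)) ℝ)
    (SEE : Matrix (Fin (2 * m)) (Fin (2 * m)) ℝ)
    (hS : (Matrix.fromBlocks SAA SAE SEA SEE)ᵀ *
        Matrix.fromBlocks (stdSymp n) 0 0 (stdSymp m) *
        Matrix.fromBlocks SAA SAE SEA SEE =
        Matrix.fromBlocks (stdSymp n) 0 0 (stdSymp m))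
    (γE : Matrix (Fin (2 * m)) (Fin (2 * m)) ℝ) (hγE : γE.IsSymm)
    (hγEcup : (γE.map Complex.ofReal +
        (Complex.I * (lam : ℂ)) • (stdSymp m).map Complex.ofReal).PosSemidef) :
    ((SEAᵀ * γE * SEA).map Complex.ofReal -
        (Complex.I * (lam : ℂ)) • (stdSymp n).map Complex.ofReal +
        (Complex.I * (lam : ℂ)) •
          (SAAᵀ * stdSymp n * SAA).map Complex.ofReal).PosSemidef :=
  dilation_necessity_general lam SAA SAE SEA SEE hS γE hγE hγEcup
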